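/- arXiv:1709.08026 — 11 statements merged into one kernel-verified Lean document; each statement's English description precedes it below -/
import Mathlib

section
/- Let f ∈ ℤ[x] be a polynomial of degree at most k. Then the ideal of ℤ generated by the values f(a) for all a ∈ ℤ equals the ideal generated by the finitely many values f(0), f(1), ..., f(k). -/
/-!
Since `f` has degree at most `k`, the `(k + 1)`-st forward difference of `a ↦ f a` vanishes.
A function `g : ℤ → G` whose `n`-th forward difference lies in a subgroup `N` and which maps
`0, …, n - 1` into `N` maps all of `ℤ` into `N`: by induction on `n`, applied to `Δ g`, every
difference `g (a + 1) - g a` lies in `N`, and so does `g 0`.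
-/

open Polynomial fwdDiff

lemma AddSubgroup.mem_of_fwdDiff_mem {G : Type*} [AddCommGroup G] {N : AddSubgroup G}
    {g : ℤ → G} (hΔ : ∀ a, Δ_[1] g a ∈ N) (h₀ : g 0 ∈ N) (a : ℤ) : g a ∈ N := by
  induction a using Int.induction_on with
  | zero => exact h₀
  | succ b ih => simpa [fwdDiff] using N.add_mem (hΔ b) ih
  | pred b ih => simpa [fwdDiff] using N.sub_mem ih (hΔ (-b - 1))

lemma AddSubgroup.mem_of_fwdDiff_iter_mem {G : Type*} [AddCommGroup G] {N : AddSubgroup G}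
    {n : ℕ} {g : ℤ → G} (hΔ : ∀ a, (Δ_[1])^[n] g a ∈ N) (hg : ∀ i : ℕ, i < n → g i ∈ N)
    (a : ℤ) : g a ∈ N := by
  induction n generalizing g a with
  | zero => exact hΔ a
  | succ n ih =>
    have hΔg : ∀ b, Δ_[1] g b ∈ N := by
      refine ih (fun b ↦ ?_) (fun i hi ↦ ?_)
      · simpa only [Function.iterate_succ_apply] using hΔ b
      · simpa [fwdDiff] using N.sub_mem (hg (i + 1) (by omega)) (hg i (by omega))
    exact N.mem_of_fwdDiff_mem hΔg (by exact_mod_cast hg 0 n.succ_pos) a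

theorem stmt_0 (f : Polynomial ℤ) (k : ℕ) (hdeg : f.natDegree ≤ k) :
    Ideal.span (Set.range fun a : ℤ => f.eval a) =
      Ideal.span ((fun i : ℕ => f.eval (i : ℤ)) '' Set.Iic k) := by
  set I := Ideal.span ((fun i : ℕ => f.eval (i : ℤ)) '' Set.Iic k)
  refine le_antisymm (Ideal.span_le.mpr ?_) (Ideal.span_mono ?_)
  · rintro _ ⟨a, rfl⟩
    have hΔ : (Δ_[1])^[k + 1] f.eval = 0 := fwdDiff_iter_eq_zero_of_degree_lt (by omega)
    show f.eval a ∈ I.toAddSubgroup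
    refine I.toAddSubgroup.mem_of_fwdDiff_iter_mem (g := f.eval) (n := k + 1)
      (fun b ↦ ?_) (fun i hi ↦ ?_) a
    · simp [hΔ]
    · exact Ideal.subset_span ⟨i, Set.mem_Iic.mpr (by omega), rfl⟩
  · rintro _ ⟨i, -, rfl⟩
    exact ⟨i, rfl⟩
end

section
/- Let f ∈ ℤ[x] be a primitive polynomial (the gcd of its coefficients is 1) of degree k. Then the fixed divisor d(ℤ, f) = gcd{f(a) : a ∈ ℤ} divides k!. -/
/-!
The `k`-th iterated forward difference of `f` is the constant `k! * lc f`, and iterated forward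
differences are integer combinations of values of `f`, so `k! * lc f` lies in the ideal of values.
Subtracting `lc f * x (x - 1) ⋯ (x - k + 1)`, whose values are multiples of `k! * lc f`, lowers the
degree without leaving that ideal; by induction `k!` times every coefficient lies in it, and since
the coefficients of a primitive polynomial generate the unit ideal, so does `k!`.
-/

open Polynomial Nat

theorem fwdDiff_iter_mem_span_range {M R : Type*} [AddCommMonoid M] [CommRing R]
    (f : M → R) (h : M) (n : ℕ) (y : M) :
    (fwdDiff h)^[n] f y ∈ Ideal.span (Set.range f) := by
  rw [fwdDiff_iter_eq_sum_shift]
  exact Ideal.sum_mem _ fun k _ => Submodule.smul_of_tower_mem _ _ (Ideal.subset_span ⟨_, rfl⟩)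

namespace Polynomial

variable {R : Type*} [CommRing R]

theorem factorial_mul_coeff_of_natDegree_le_mem_span_range_eval {P : R[X]} {k : ℕ}
    (hP : P.natDegree ≤ k) : (k ! : R) * P.coeff k ∈ Ideal.span (Set.range P.eval) := by
  obtain hlt | rfl := hP.lt_or_eq
  · simp [coeff_eq_zero_of_natDegree_lt hlt]
  · have h := congr_fun P.fwdDiff_iter_degree_eq_factorial 0
    rw [Pi.smul_apply, Pi.natCast_apply, smul_eq_mul] at h
    rw [mul_comm, ← leadingCoeff, ← h]
    exact fwdDiff_iter_mem_span_range _ _ _ _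

theorem natDegree_descPochhammer_le (k : ℕ) : (descPochhammer R k).natDegree ≤ k := by
  rw [← descPochhammer_map (Int.castRingHom R)]
  exact natDegree_map_le.trans (descPochhammer_natDegree ℤ k).le

theorem coeff_descPochhammer_self (k : ℕ) : (descPochhammer R k).coeff k = 1 := by
  have h := (monic_descPochhammer ℤ k).coeff_natDegree
  rw [descPochhammer_natDegree] at h
  rw [← descPochhammer_map (Int.castRingHom R), coeff_map, h, map_one]

theorem natDegree_sub_C_mul_descPochhammer_le {P : R[X]} {k : ℕ} (hP : P.natDegree ≤ k + 1) :
    (P - C (P.coeff (k + 1)) * descPochhammer R (k + 1)).natDegree ≤ k := by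
  refine natDegree_le_iff_coeff_eq_zero.mpr fun m hm => ?_
  obtain rfl | hm := (Nat.succ_le_of_lt hm).eq_or_lt
  · simp [coeff_descPochhammer_self]
  · simp [coeff_eq_zero_of_natDegree_lt (hP.trans_lt hm),
      coeff_eq_zero_of_natDegree_lt ((natDegree_descPochhammer_le (R := R) _).trans_lt hm)]

variable [BinomialRing R]

theorem factorial_dvd_eval_descPochhammer (k : ℕ) (a : R) :
    (k ! : R) ∣ (descPochhammer R k).eval a := by
  rw [← descPochhammer_map (Int.castRingHom R), eval_map, ← algebraMap_int_eq, ← aeval_def,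
    aeval_eq_smeval, Ring.descPochhammer_eq_factorial_smul_choose, nsmul_eq_mul]
  exact dvd_mul_right _ _

theorem span_range_eval_sub_C_mul_descPochhammer_le {P : R[X]} {k : ℕ}
    (hc : (k ! : R) * P.coeff k ∈ Ideal.span (Set.range P.eval)) :
    Ideal.span (Set.range (P - C (P.coeff k) * descPochhammer R k).eval)
      ≤ Ideal.span (Set.range P.eval) := by
  refine Ideal.span_le.mpr ?_
  rintro _ ⟨a, rfl⟩
  obtain ⟨t, ht⟩ := factorial_dvd_eval_descPochhammer k a
  have heval : (P - C (P.coeff k) * descPochhammer R k).eval a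
      = P.eval a - t * ((k ! : R) * P.coeff k) := by
    rw [eval_sub, eval_mul, eval_C, ht]
    ring
  simp only [SetLike.mem_coe, heval]
  exact sub_mem (Ideal.subset_span ⟨a, rfl⟩) (Ideal.mul_mem_left _ _ hc)

theorem factorial_mul_coeff_mem_span_range_eval {P : R[X]} {k : ℕ} (hP : P.natDegree ≤ k)
    (n : ℕ) : (k ! : R) * P.coeff n ∈ Ideal.span (Set.range P.eval) := by
  induction k generalizing P with
  | zero =>
    obtain rfl | hn := eq_or_ne n 0
    · rw [factorial_zero, cast_one, one_mul, coeff_zero_eq_eval_zero]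
      exact Ideal.subset_span ⟨0, rfl⟩
    · simp [coeff_eq_zero_of_natDegree_lt (hP.trans_lt (Nat.pos_of_ne_zero hn))]
  | succ k ih =>
    set Q := descPochhammer R (k + 1)
    have hc := factorial_mul_coeff_of_natDegree_le_mem_span_range_eval hP
    have hlower := span_range_eval_sub_C_mul_descPochhammer_le hc
      (ih (natDegree_sub_C_mul_descPochhammer_le hP))
    have hsplit : ((k + 1) ! : R) * P.coeff n
        = (k + 1 : R) * ((k ! : R) * (P - C (P.coeff (k + 1)) * Q).coeff n)
          + Q.coeff n * (((k + 1) ! : R) * P.coeff (k + 1)) := by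
      simp only [coeff_sub, coeff_C_mul, factorial_succ]
      push_cast
      ring
    rw [hsplit]
    exact add_mem (Ideal.mul_mem_left _ _ hlower) (Ideal.mul_mem_left _ _ hc)

end Polynomial

namespace Polynomial.IsPrimitive

variable {R : Type*} [CommRing R] [IsPrincipalIdealRing R] {P : R[X]}

theorem span_range_coeff_eq_top (hP : P.IsPrimitive) : Ideal.span (Set.range P.coeff) = ⊤ := by
  obtain ⟨e, he⟩ := (IsPrincipalIdealRing.principal (Ideal.span (Set.range P.coeff))).principal
  rw [Ideal.submodule_span_eq] at he
  have hdvd : C e ∣ P := (C_dvd_iff_dvd_coeff e P).mpr fun n =>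
    Ideal.mem_span_singleton.mp (he ▸ Ideal.subset_span ⟨n, rfl⟩)
  rw [he, Ideal.span_singleton_eq_top]
  exact hP e hdvd

theorem mem_of_forall_mul_coeff_mem (hP : P.IsPrimitive) {I : Ideal R} {a : R}
    (h : ∀ n, a * P.coeff n ∈ I) : a ∈ I := by
  have hle : Ideal.span {a} * Ideal.span (Set.range P.coeff) ≤ I := by
    rw [Ideal.span_singleton_mul_le_iff]
    intro z hz
    induction hz using Submodule.span_induction with
    | mem _ hx => obtain ⟨n, rfl⟩ := hx; exact h n
    | zero => simp
    | add _ _ _ _ hx hy => rw [mul_add]; exact add_mem hx hy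
    | smul _ _ _ hx => rw [smul_eq_mul, mul_left_comm]; exact Ideal.mul_mem_left _ _ hx
  rw [hP.span_range_coeff_eq_top, Ideal.mul_top] at hle
  exact hle (Ideal.mem_span_singleton_self a)

end Polynomial.IsPrimitive

theorem stmt_1 (f : Polynomial ℤ) (k : ℕ) (hdeg : f.natDegree = k)
    (hprim : f.IsPrimitive) :
    ((Nat.factorial k : ℕ) : ℤ) ∈ Ideal.span (Set.range fun a : ℤ => f.eval a) :=
  hprim.mem_of_forall_mul_coeff_mem (factorial_mul_coeff_mem_span_range_eval hdeg.le)
end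

section
/- Let f ∈ ℤ[x,y] be a polynomial with degree m₁ in x and m₂ in y. Then gcd{f(a,b) : a,b ∈ ℤ} equals gcd{f(r,s) : 0 ≤ r ≤ m₁, 0 ≤ s ≤ m₂}. -/
/-!
On each axis-parallel line, `f` restricts to a polynomial of degree at most `mᵢ`, so its
`(mᵢ + 1)`-st forward difference vanishes. That is a linear recurrence of order `mᵢ + 1` whose
extreme coefficients are `±1`, so the `ℤ`-span of any `mᵢ + 1` consecutive values contains the
values at all integers, in both directions. Applying this once per coordinate moves every
integer point into the box `∏ [0, mᵢ]` without leaving the span.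
-/

open Finset Function
open scoped fwdDiff

section
variable {M : Type*} [AddCommGroup M] {F : ℤ → M} {m : ℕ}

lemma sum_shift_eq_zero_of_fwdDiff_iter_eq_zero (hF : Δ_[1] ^[m + 1] F = 0) (y : ℤ) :
    ∑ k ∈ range (m + 2), ((-1 : ℤ) ^ (m + 1 - k) * (m + 1).choose k) • F (y + k) = 0 := by
  simpa using (fwdDiff_iter_eq_sum_shift (1 : ℤ) F (m + 1) y).symm.trans (congrFun hF y)

variable {S : Submodule ℤ M}

lemma add_succ_mem_of_fwdDiff_iter_eq_zero (hF : Δ_[1] ^[m + 1] F = 0) {y : ℤ}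
    (hy : ∀ k ≤ m, F (y + k) ∈ S) : F (y + (m + 1 : ℕ)) ∈ S := by
  have h := sum_shift_eq_zero_of_fwdDiff_iter_eq_zero hF y
  rw [sum_range_succ, Nat.sub_self, pow_zero, Nat.choose_self, Nat.cast_one, mul_one, one_smul,
    add_eq_zero_iff_eq_neg'] at h
  rw [h]
  exact S.neg_mem <| S.sum_mem fun k hk ↦
    S.smul_mem _ <| hy k <| Nat.lt_succ_iff.mp <| mem_range.mp hk

lemma mem_of_add_succ_mem_of_fwdDiff_iter_eq_zero (hF : Δ_[1] ^[m + 1] F = 0) {y : ℤ}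
    (hy : ∀ k ≤ m, F (y + (k + 1 : ℕ)) ∈ S) : F y ∈ S := by
  have h := sum_shift_eq_zero_of_fwdDiff_iter_eq_zero hF y
  rw [sum_range_succ', Nat.sub_zero, Nat.choose_zero_right, Nat.cast_one, mul_one,
    Nat.cast_zero, add_zero, add_eq_zero_iff_eq_neg'] at h
  rw [← S.smul_mem_iff_of_isUnit ((isUnit_neg_one (α := ℤ)).pow (m + 1)), h]
  exact S.neg_mem <| S.sum_mem fun k hk ↦
    S.smul_mem _ <| hy k <| Nat.lt_succ_iff.mp <| mem_range.mp hk

theorem mem_span_image_Icc_of_fwdDiff_iter_eq_zero (hF : Δ_[1] ^[m + 1] F = 0) (a : ℤ) :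
    F a ∈ Submodule.span ℤ (F '' Set.Icc 0 m) := by
  set S := Submodule.span ℤ (F '' Set.Icc 0 m)
  suffices ∀ y : ℤ, ∀ k ≤ m, F (y + k) ∈ S by simpa using this a 0 m.zero_le
  intro y
  induction y using Int.induction_on with
  | zero =>
    intro k hk
    exact Submodule.subset_span ⟨k, ⟨k.cast_nonneg, by exact_mod_cast hk⟩, by simp⟩
  | succ y ih =>
    intro k hk
    rcases hk.lt_or_eq with hk | rfl
    · convert ih (k + 1) hk using 2; push_cast; ring
    · convert add_succ_mem_of_fwdDiff_iter_eq_zero hF ih using 2; push_cast; ring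
  | pred y ih =>
    intro k hk
    rcases k.eq_zero_or_pos with rfl | hk0
    · refine mem_of_add_succ_mem_of_fwdDiff_iter_eq_zero hF fun j hj ↦ ?_
      convert ih j hj using 2; push_cast; ring
    · convert ih (k - 1) (by omega) using 2; push_cast [Nat.cast_sub hk0]; ring
end

namespace MvPolynomial
variable {R σ : Type*} [CommRing R]

theorem exists_natDegree_le_degreeOf_eval_eq_eval_update [DecidableEq σ] (f : MvPolynomial σ R)
    (i : σ) (v : σ → R) :
    ∃ p : Polynomial R, p.natDegree ≤ f.degreeOf i ∧ ∀ t, p.eval t = eval (update v i t) f := by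
  let e := Equiv.optionSubtypeNe i
  refine ⟨(optionEquivLeft R _ (rename e.symm f)).map (eval fun j : {j // j ≠ i} ↦ v j), ?_,
    fun t ↦ ?_⟩
  · exact (Polynomial.natDegree_map_le).trans (degreeOf_eq_natDegree i f).ge
  · rw [← optionEquivLeft_elim_eval, eval_rename]
    congr 2
    funext j
    by_cases hj : j = i
    · subst hj; simp [e]
    · simp [e, Equiv.optionSubtypeNe_symm_of_ne hj, hj]

theorem fwdDiff_iter_eval_update_eq_zero [DecidableEq σ] (f : MvPolynomial σ R) (i : σ)
    (v : σ → R) :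
    Δ_[1] ^[f.degreeOf i + 1] (fun t ↦ eval (update v i t) f) = 0 := by
  obtain ⟨p, hp, hpf⟩ := exists_natDegree_le_degreeOf_eval_eq_eval_update f i v
  simp_rw [← hpf]
  exact Polynomial.fwdDiff_iter_eq_zero_of_degree_lt (Nat.lt_succ_of_le hp)

theorem eval_mem_span_image_pi_of_forall_notMem (f : MvPolynomial σ ℤ) (s : Finset σ) {v : σ → ℤ}
    (hv : ∀ j ∉ s, v j ∈ Set.Icc 0 (f.degreeOf j : ℤ)) :
    eval v f ∈ Ideal.span ((eval · f) '' Set.univ.pi fun j ↦ Set.Icc 0 (f.degreeOf j : ℤ)) := by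
  classical
  induction s using Finset.induction_on generalizing v with
  | empty => exact Ideal.subset_span ⟨v, fun j _ ↦ hv j (notMem_empty j), rfl⟩
  | insert i s hi ih =>
    have hline := mem_span_image_Icc_of_fwdDiff_iter_eq_zero
      (fwdDiff_iter_eval_update_eq_zero f i v) (v i)
    rw [update_eq_self] at hline
    refine Submodule.span_le.mpr ?_ hline
    rintro _ ⟨r, hr, rfl⟩
    refine ih fun j hj ↦ ?_
    by_cases hji : j = i
    · subst hji; simpa using hr
    · simpa [hji] using hv j (by simp [hji, hj])

theorem span_range_eval_eq_span_image_pi [Fintype σ] (f : MvPolynomial σ ℤ) :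
    Ideal.span (Set.range (eval · f)) =
      Ideal.span ((eval · f) '' Set.univ.pi fun j ↦ Set.Icc 0 (f.degreeOf j : ℤ)) := by
  refine le_antisymm (Ideal.span_le.mpr ?_) (Ideal.span_mono (Set.image_subset_range _ _))
  rintro _ ⟨v, rfl⟩
  exact eval_mem_span_image_pi_of_forall_notMem f Finset.univ fun j hj ↦ absurd (mem_univ j) hj

end MvPolynomial

theorem stmt_3 (f : MvPolynomial (Fin 2) ℤ) (m₁ m₂ : ℕ)
    (h1 : MvPolynomial.degreeOf 0 f = m₁) (h2 : MvPolynomial.degreeOf 1 f = m₂) :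
    Ideal.span (Set.range fun v : Fin 2 → ℤ => MvPolynomial.eval v f) =
      Ideal.span ((fun v : Fin 2 → ℤ => MvPolynomial.eval v f) ''
        {v : Fin 2 → ℤ | 0 ≤ v 0 ∧ v 0 ≤ (m₁ : ℤ) ∧ 0 ≤ v 1 ∧ v 1 ≤ (m₂ : ℤ)}) := by
  rw [MvPolynomial.span_range_eval_eq_span_image_pi]
  congr 2
  ext v
  simp only [Set.mem_pi, Set.mem_univ, Set.mem_Icc, Set.mem_ofPred_eq, forall_const,
    Fin.forall_fin_two, h1, h2, and_assoc]
end

section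
/- Let f ∈ ℤ[x₁,...,xₙ] be a primitive polynomial with partial degree mᵢ in each variable xᵢ. Then the fixed divisor d(ℤⁿ, f) = gcd{f(a) : a ∈ ℤⁿ} divides m₁! · m₂! · ⋯ · mₙ!. -/
/-!
Newton interpolation: a polynomial `p` of degree at most `m` over a domain of characteristic zero
satisfies `m! • p = ∑ₖ (m!/k!) • Δᵏp(0) • X(X-1)⋯(X-k+1)`, and each `Δᵏp(0)` is an integer
combination of values of `p` at natural numbers. So `m!` times any coefficient of `p` is an integer
combination of values of `p`. Applying this one variable at a time, `(∏ mᵢ!) • coeff s f` lies in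
the `ℤ`-span of the values of `f` on `ℕⁿ`. As `f` is primitive and `ℤ` is a principal ideal domain,
its coefficients generate the unit ideal, so `∏ mᵢ!` itself lies in the ideal of values.
-/

open Finset Nat fwdDiff

theorem fwdDiff_iter_mem_span_range_s4 {M G : Type*} [AddCommMonoid M] [AddCommGroup G]
    (h : M) (f : M → G) (k : ℕ) (y : M) :
    (Δ_[h])^[k] f y ∈ Submodule.span ℤ (Set.range f) := by
  rw [fwdDiff_iter_eq_sum_shift]
  exact Submodule.sum_mem _ fun i _ => Submodule.smul_mem _ _ (Submodule.subset_span ⟨_, rfl⟩)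

namespace Polynomial

variable {R : Type*} [CommRing R] [IsDomain R] [CharZero R]

theorem factorial_smul_eq_sum_fwdDiff_iter_smul_descPochhammer (p : R[X]) {m : ℕ}
    (hm : p.natDegree ≤ m) :
    m ! • p = ∑ k ∈ range (m + 1),
      (m ! / k !) • (Δ_[1])^[k] (fun j : ℕ => p.eval (j : R)) 0 • descPochhammer R k := by
  refine eq_of_degrees_lt_of_eval_index_eq (v := fun j : ℕ => (j : R)) (range (m + 1))
    (fun a _ b _ h => Nat.cast_injective h) ?_ ?_ fun j hj => ?_
  · rw [card_range]
    exact (degree_smul_le _ _).trans_lt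
      (degree_le_natDegree.trans_lt (by exact_mod_cast lt_succ_of_le hm))
  · refine (degree_sum_le _ _).trans_lt ?_
    rw [card_range, Finset.sup_lt_iff (WithBot.bot_lt_coe _)]
    intro k hk
    refine ((degree_smul_le _ _).trans
      ((degree_smul_le _ _).trans degree_le_natDegree)).trans_lt ?_
    rw [descPochhammer_natDegree]
    exact_mod_cast mem_range.mp hk
  · have hj : j ≤ m := mem_range_succ_iff.mp hj
    have newton : p.eval (j : R) =
        ∑ k ∈ range (m + 1), j.choose k • (Δ_[1])^[k] (fun i : ℕ => p.eval (i : R)) 0 := by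
      rw [← sum_subset (range_subset_range.mpr (succ_le_succ hj))
        fun k _ hk => by rw [choose_eq_zero_of_lt (by simpa using hk), zero_smul]]
      simpa using shift_eq_sum_fwdDiff_iter 1 (fun i : ℕ => p.eval (i : R)) j 0
    rw [eval_smul, newton, smul_sum, eval_finsetSum]
    refine sum_congr rfl fun k hk => ?_
    have hfactor : m ! / k ! * j.descFactorial k = m ! * j.choose k := by
      rw [descFactorial_eq_factorial_mul_choose, ← mul_assoc,
        Nat.div_mul_cancel (factorial_dvd_factorial (mem_range_succ_iff.mp hk))]
    rw [eval_smul, eval_smul, descPochhammer_eval_eq_descFactorial, smul_eq_mul, mul_comm,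
      ← nsmul_eq_mul, smul_smul, smul_smul, hfactor]

theorem factorial_smul_coeff_mem_span_eval_natCast (p : R[X]) {m : ℕ} (hm : p.natDegree ≤ m)
    (t : ℕ) : m ! • p.coeff t ∈ Submodule.span ℤ (Set.range fun k : ℕ => p.eval (k : R)) := by
  rw [← coeff_smul, factorial_smul_eq_sum_fwdDiff_iter_smul_descPochhammer p hm, finsetSum_coeff]
  refine Submodule.sum_mem _ fun k _ => ?_
  rw [coeff_smul, coeff_smul, smul_eq_mul, mul_comm, ← descPochhammer_map (Int.castRingHom R),
    coeff_map, eq_intCast, ← zsmul_eq_mul]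
  exact Submodule.smul_of_tower_mem _ _
    (Submodule.smul_mem _ _ (fwdDiff_iter_mem_span_range_s4 _ _ _ _))

end Polynomial

namespace MvPolynomial

theorem degreeOf_eval_C_finSuccEquiv_le {R : Type*} [CommSemiring R] {n : ℕ}
    (f : MvPolynomial (Fin (n + 1)) R) (a : R) (j : Fin n) :
    degreeOf j ((finSuccEquiv R n f).eval (C a)) ≤ degreeOf j.succ f := by
  rw [Polynomial.eval_eq_sum_range]
  refine (degreeOf_sum_le _ _ _).trans (Finset.sup_le fun i _ => ?_)
  rw [← map_pow]
  exact (degreeOf_mul_C_le _ _ _).trans (degreeOf_coeff_finSuccEquiv f j i)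

variable {R : Type*} [CommRing R]

abbrev natValueSpan {n : ℕ} (f : MvPolynomial (Fin n) R) : Submodule ℤ R :=
  Submodule.span ℤ (Set.range fun v : Fin n → ℕ => eval ((↑) ∘ v) f)

theorem natValueSpan_eval_finSuccEquiv_le {n : ℕ} (f : MvPolynomial (Fin (n + 1)) R) (k : ℕ) :
    natValueSpan ((finSuccEquiv R n f).eval (k : MvPolynomial (Fin n) R)) ≤ natValueSpan f := by
  refine Submodule.span_mono (Set.range_subset_iff.mpr fun v => ⟨Fin.cons k v, ?_⟩)
  dsimp only
  rw [Fin.comp_cons, eval_eq_eval_mv_eval', Polynomial.eval_natCast_map]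

variable [IsDomain R] [CharZero R]

theorem prod_factorial_smul_coeff_mem_natValueSpan {n : ℕ} (f : MvPolynomial (Fin n) R)
    (m : Fin n → ℕ) (hf : ∀ i, degreeOf i f ≤ m i) (s : Fin n →₀ ℕ) :
    (∏ i, (m i)!) • coeff s f ∈ natValueSpan f := by
  induction n with
  | zero =>
    obtain ⟨c, rfl⟩ := C_surjective (Fin 0) f
    rw [Subsingleton.elim s 0, coeff_zero_C, Fin.prod_univ_zero, one_smul]
    exact Submodule.subset_span ⟨Fin.elim0, eval_C _⟩
  | succ n ih =>
    set P := finSuccEquiv R n f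
    have hP : P.natDegree ≤ m 0 := (natDegree_finSuccEquiv f).trans_le (hf 0)
    have hcoeff : (∏ i : Fin n, (m i.succ)!) • coeff s.tail ((m 0)! • P.coeff (s 0)) =
        (∏ i, (m i)!) • coeff s f := by
      rw [coeff_smul, finSuccEquiv_coeff_coeff, Finsupp.cons_tail, smul_smul, Fin.prod_univ_succ,
        mul_comm]
    rw [← hcoeff]
    let ψ : MvPolynomial (Fin n) R →ₗ[ℤ] R :=
      (∏ i : Fin n, (m i.succ)!) • (lcoeff R s.tail).restrictScalars ℤ
    refine (Submodule.span_le (p := (natValueSpan f).comap ψ)).mpr ?_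
      (P.factorial_smul_coeff_mem_span_eval_natCast hP (s 0))
    rintro _ ⟨k, rfl⟩
    refine natValueSpan_eval_finSuccEquiv_le f k (ih _ (fun i => m i.succ) (fun i => ?_) s.tail)
    rw [← map_natCast C]
    exact (degreeOf_eval_C_finSuccEquiv_le f _ i).trans (hf i.succ)

end MvPolynomial

theorem Ideal.span_range_eq_top_of_forall_dvd_isUnit {R ι : Type*} [CommRing R]
    [IsPrincipalIdealRing R] (g : ι → R) (hg : ∀ d, (∀ i, d ∣ g i) → IsUnit d) :
    Ideal.span (Set.range g) = ⊤ := by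
  obtain ⟨d, hd⟩ := (IsPrincipalIdealRing.principal (Ideal.span (Set.range g))).principal
  rw [Ideal.submodule_span_eq] at hd
  rw [hd, Ideal.span_singleton_eq_top]
  exact hg d fun i => Ideal.mem_span_singleton.mp (hd ▸ Ideal.subset_span ⟨i, rfl⟩)

theorem stmt_4 (n : ℕ) (f : MvPolynomial (Fin n) ℤ) (m : Fin n → ℕ)
    (hdeg : ∀ i, MvPolynomial.degreeOf i f = m i)
    (hprim : ∀ d : ℤ, (∀ s : Fin n →₀ ℕ, d ∣ MvPolynomial.coeff s f) → IsUnit d) :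
    ((∏ i, Nat.factorial (m i) : ℕ) : ℤ) ∈
      Ideal.span (Set.range fun v : Fin n → ℤ => MvPolynomial.eval v f) := by
  set I := Ideal.span (Set.range fun v : Fin n → ℤ => MvPolynomial.eval v f)
  set N : ℤ := ((∏ i, Nat.factorial (m i) : ℕ) : ℤ)
  have hcoeff : Ideal.span (Set.range fun s => MvPolynomial.coeff s f) ≤
      Submodule.comap (LinearMap.mulLeft ℤ N) I := by
    refine Ideal.span_le.mpr (Set.range_subset_iff.mpr fun s => ?_)
    have hnat : N * MvPolynomial.coeff s f ∈ MvPolynomial.natValueSpan f := by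
      simpa only [N, nsmul_eq_mul, Nat.cast_prod] using
        MvPolynomial.prod_factorial_smul_coeff_mem_natValueSpan f m (fun i => (hdeg i).le) s
    refine Submodule.span_mono ?_ hnat
    rintro _ ⟨v, rfl⟩
    exact ⟨Nat.cast ∘ v, rfl⟩
  rw [Ideal.span_range_eq_top_of_forall_dvd_isUnit _ hprim] at hcoeff
  simpa using hcoeff (Submodule.mem_top (x := 1))
end

section
/- Let A = {s·a + b : s ∈ ℤ} be an arithmetic progression with a, b ∈ ℤ, a ≠ 0, and let f ∈ ℤ[x] be a primitive polynomial of degree m. Then gcd{f(t) : t ∈ A} divides m! · a^m. -/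
/-!
Let `I` be the ideal generated by the values of `f` on the progression and `G(x) = f(ax + b)`.
The iterated differences `Δᵏ G(0)` are integer combinations of values of `G`, so they lie in `I`,
and Newton interpolation `m! G = ∑ₖ Δᵏ G(0) (m!/k!) x(x-1)⋯(x-k+1)` puts `m!` times every
coefficient of `G` in `I`. Expanding `aᵐ f(x) = aᵐ G((x - b)/a)` in powers of `x - b` does the same
for `m! aᵐ` times the coefficients of `f`, and these generate `m! aᵐ ℤ` because `f` is primitive.
-/
open Polynomial Finset
open scoped fwdDiff Nat

variable {R : Type*} [CommRing R]

theorem Ideal.fwdDiff_iter_apply_zero_mem {I : Ideal R} {f : R → R} (h : ∀ n : ℕ, f n ∈ I)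
    (k : ℕ) :
    Δ_[1] ^[k] f 0 ∈ I := by
  rw [fwdDiff_iter_eq_sum_shift]
  refine I.sum_mem fun j _ => ?_
  rw [zsmul_eq_mul]
  exact I.mul_mem_left _ (by simpa using h j)

namespace Polynomial

theorem eval_natCast_eq_sum_fwdDiff_iter {p : R[X]} {m : ℕ} (hp : p.natDegree ≤ m) (n : ℕ) :
    p.eval (n : R) = ∑ k ∈ range (m + 1), n.choose k • Δ_[1] ^[k] p.eval 0 := by
  calc p.eval (n : R) = ∑ k ∈ range (n + 1), n.choose k • Δ_[1] ^[k] p.eval 0 := by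
        simpa using shift_eq_sum_fwdDiff_iter (1 : R) p.eval n 0
    _ = ∑ k ∈ range (n + m + 1), n.choose k • Δ_[1] ^[k] p.eval 0 :=
        sum_subset (range_subset_range.2 (by omega)) fun k hk hkn => by
          rw [Nat.choose_eq_zero_of_lt (by simp at hk hkn; omega), zero_smul]
    _ = _ := (sum_subset (range_subset_range.2 (by omega)) fun k hk hkm => by
          rw [fwdDiff_iter_eq_zero_of_degree_lt (by simp at hkm; omega), Pi.zero_apply,
            smul_zero]).symm

theorem C_factorial_mul_eq_sum_descPochhammer [IsDomain R] [CharZero R] {p : R[X]} {m : ℕ}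
    (hp : p.natDegree ≤ m) :
    C (m ! : R) * p =
      ∑ k ∈ range (m + 1), C (Δ_[1] ^[k] p.eval 0 * (m ! / k ! : ℕ)) * descPochhammer R k := by
  refine eq_of_infinite_eval_eq _ _ ((Set.infinite_range_of_injective Nat.cast_injective).mono ?_)
  rintro _ ⟨n, rfl⟩
  simp only [Set.mem_ofPred_eq, eval_mul, eval_C, eval_finsetSum,
    descPochhammer_eval_eq_descFactorial, eval_natCast_eq_sum_fwdDiff_iter hp n, mul_sum]
  refine sum_congr rfl fun k hk => ?_
  have hfac : ((m ! / k ! : ℕ) : R) * k ! = m ! := by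
    rw [← Nat.cast_mul, Nat.div_mul_cancel <|
      Nat.factorial_dvd_factorial (by simpa [Nat.lt_succ_iff] using hk)]
  rw [Nat.descFactorial_eq_factorial_mul_choose, nsmul_eq_mul, Nat.cast_mul]
  linear_combination (-(n.choose k : R) * Δ_[1] ^[k] p.eval 0) * hfac

theorem C_factorial_mul_mem_map_C [IsDomain R] [CharZero R] {I : Ideal R} {p : R[X]} {m : ℕ}
    (hp : p.natDegree ≤ m) (h : ∀ n : ℕ, p.eval (n : R) ∈ I) :
    C (m ! : R) * p ∈ I.map C := by
  rw [C_factorial_mul_eq_sum_descPochhammer hp]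
  refine Ideal.sum_mem _ fun k _ => Ideal.mul_mem_right _ _ (Ideal.mem_map_of_mem _ ?_)
  exact I.mul_mem_right _ (Ideal.fwdDiff_iter_apply_zero_mem h k)

theorem IsPrimitive.mem_of_C_mul_mem_map_C [IsDomain R] [NormalizedGCDMonoid R]
    [IsPrincipalIdealRing R] {I : Ideal R} {p : R[X]} (hp : p.IsPrimitive) {r : R}
    (h : C r * p ∈ I.map C) : r ∈ I := by
  obtain ⟨d, rfl⟩ := Submodule.IsPrincipal.principal I
  have hd : d ∣ (C r * p).content := dvd_content_iff_C_dvd.2 <|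
    (C_dvd_iff_dvd_coeff _ _).2 fun i => Ideal.mem_span_singleton.1 (Ideal.mem_map_C_iff.1 h i)
  exact Ideal.mem_span_singleton.2 <| by
    simpa [hp.content_eq_one] using hd.trans (associated_content_C_mul r p).dvd

theorem natDegree_comp_linear [IsDomain R] (p : R[X]) {a : R} (ha : a ≠ 0) (b : R) :
    (p.comp (C a * X + C b)).natDegree = p.natDegree := by
  rw [natDegree_comp, natDegree_linear ha, mul_one]

theorem C_pow_mul_eq_sum_coeff_comp [IsDomain R] [CharZero R] {p : R[X]} {m : ℕ}
    (hp : p.natDegree ≤ m) {a : R} (ha : a ≠ 0) (b : R) :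
    C (a ^ m) * p =
      ∑ j ∈ range (m + 1), C ((p.comp (C a * X + C b)).coeff j * a ^ (m - j)) * (X - C b) ^ j := by
  have hinj : Function.Injective fun n : ℕ => (n : R) * a + b := fun x y hxy => by
    simpa [ha] using hxy
  refine eq_of_infinite_eval_eq _ _ ((Set.infinite_range_of_injective hinj).mono ?_)
  rintro _ ⟨n, rfl⟩
  simp only [Set.mem_ofPred_eq, eval_mul, eval_C, eval_finsetSum, eval_pow, eval_sub, eval_X,
    add_sub_cancel_right]
  have hcomp : p.eval (n * a + b) = (p.comp (C a * X + C b)).eval (n : R) := by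
    simp [eval_comp, mul_comm a]
  rw [hcomp, eval_eq_sum_range' (n := m + 1) (by rw [natDegree_comp_linear p ha]; omega), mul_sum]
  refine sum_congr rfl fun j hj => ?_
  rw [mul_pow, ← pow_sub_mul_pow a (Nat.lt_succ_iff.1 (mem_range.1 hj))]
  ring

theorem C_mul_pow_mul_mem_map_C_of_comp [IsDomain R] [CharZero R] {I : Ideal R} {p : R[X]}
    {m : ℕ} (hp : p.natDegree ≤ m) {a : R} (ha : a ≠ 0) (b : R) {c : R}
    (h : C c * p.comp (C a * X + C b) ∈ I.map C) :
    C (c * a ^ m) * p ∈ I.map C := by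
  rw [C_mul, mul_assoc, C_pow_mul_eq_sum_coeff_comp hp ha b, mul_sum]
  refine Ideal.sum_mem _ fun j _ => ?_
  have hj := Ideal.mem_map_C_iff.1 h j
  rw [coeff_C_mul] at hj
  convert Ideal.mul_mem_right (C (a ^ (m - j)) * (X - C b) ^ j) _ (Ideal.mem_map_of_mem C hj)
    using 1
  simp only [C_mul]
  ring

end Polynomial

theorem stmt_5 (a b : ℤ) (ha : a ≠ 0) (f : Polynomial ℤ) (m : ℕ)
    (hdeg : f.natDegree = m) (hprim : f.IsPrimitive) :
    ((Nat.factorial m : ℕ) : ℤ) * a ^ m ∈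
      Ideal.span ((fun t : ℤ => f.eval t) '' {t : ℤ | ∃ s : ℤ, t = s * a + b}) := by
  have hG : C (m ! : ℤ) * f.comp (C a * X + C b) ∈
      (Ideal.span ((fun t : ℤ => f.eval t) '' {t : ℤ | ∃ s : ℤ, t = s * a + b})).map C :=
    C_factorial_mul_mem_map_C ((f.natDegree_comp_linear ha b).trans_le hdeg.le) fun n =>
      Ideal.subset_span ⟨n * a + b, ⟨n, rfl⟩, by simp [eval_comp, mul_comm a]⟩
  exact hprim.mem_of_C_mul_mem_map_C (C_mul_pow_mul_mem_map_C_of_comp hdeg.le ha b hG)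
end

section
/- Let A = {s·a + b : s ∈ ℤ} be an arithmetic progression with a, b ∈ ℤ, a ≠ 0, and let f ∈ ℤ[x] be a primitive polynomial. If gcd(a, f(b)) = 1, then gcd{f(t) : t ∈ A} = gcd{f(t) : t ∈ ℤ}. -/
/-!
An ideal `I` containing every `f (s * a + b)` contains `f b`, so `a` is invertible modulo `I`.
Hence every `t` is congruent modulo `I` to some `s * a + b`, and then
`f t ≡ f (s * a + b) ≡ 0 [SMOD I]`.
-/

open Polynomial

theorem Polynomial.eval_mem_of_forall_eval_mul_add_mem {R : Type*} [CommRing R] {I : Ideal R}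
    {a b : R} {f : R[X]} (hcop : IsCoprime a (f.eval b)) (hI : ∀ s, f.eval (s * a + b) ∈ I)
    (t : R) : f.eval t ∈ I := by
  obtain ⟨u, v, huv⟩ := hcop
  have hb : f.eval b ∈ I := by simpa using hI 0
  have hcongr : t ≡ u * (t - b) * a + b [SMOD I] := by
    have hdiff : t - (u * (t - b) * a + b) = v * (t - b) * f.eval b := by
      linear_combination (b - t) * huv
    rw [SModEq.sub_mem, hdiff]
    exact I.mul_mem_left _ hb
  simpa using I.add_mem (SModEq.sub_mem.mp (hcongr.eval f)) (hI (u * (t - b)))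

theorem stmt_6_general (a b : ℤ) (f : Polynomial ℤ)
    (hcop : IsCoprime a (f.eval b)) :
    Ideal.span ((fun t : ℤ => f.eval t) '' {t : ℤ | ∃ s : ℤ, t = s * a + b}) =
      Ideal.span (Set.range fun t : ℤ => f.eval t) := by
  refine le_antisymm (Ideal.span_mono (Set.image_subset_range _ _)) ?_
  rw [Ideal.span_le]
  rintro _ ⟨t, rfl⟩
  refine eval_mem_of_forall_eval_mul_add_mem hcop (fun s => ?_) t
  exact Ideal.subset_span ⟨s * a + b, ⟨s, rfl⟩, rfl⟩

theorem stmt_6 (a b : ℤ) (ha : a ≠ 0) (f : Polynomial ℤ) (hprim : f.IsPrimitive)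
    (hcop : IsCoprime a (f.eval b)) :
    Ideal.span ((fun t : ℤ => f.eval t) '' {t : ℤ | ∃ s : ℤ, t = s * a + b}) =
      Ideal.span (Set.range fun t : ℤ => f.eval t) :=
  stmt_6_general a b f hcop
end

section
/- For m ≥ 1, the two-variable polynomial f(x,y) = y^{m-1} · x · (x+y) · (x+2y) ⋯ (x+(m-1)y) satisfies: m! divides f(a,b) for all integers a, b. -/
/-!
It suffices to show `p ^ k ∣ f(a, b)` whenever `p ^ k ∣ m!`. If `p ∣ b`, Legendre's formula gives
`k ≤ m - 1`, so already `p ^ k ∣ b ^ (m - 1)`. Otherwise `v * b ≡ 1 [ZMOD p ^ k]` for some `v`, and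
`v ^ m * ∏ (a + j * b) ≡ ∏ (v * a + j)`, a product of `m` consecutive integers, which `m!` divides.
-/

open Finset Nat

theorem ascPochhammer_eval_eq_prod_range {R : Type*} [CommSemiring R] (n : ℕ) (r : R) :
    (ascPochhammer R n).eval r = ∏ j ∈ Finset.range n, (r + j) := by
  induction n with
  | zero => simp
  | succ n ih => simp [ascPochhammer_succ_right, ih, prod_range_succ]

theorem Int.factorial_dvd_prod_range_add (m : ℕ) (a : ℤ) :
    (m ! : ℤ) ∣ ∏ j ∈ Finset.range m, (a + j) := by
  have h := Ring.factorial_nsmul_multichoose_eq_ascPochhammer a m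
  rw [← Polynomial.ascPochhammer_smeval_cast ℤ, ← Polynomial.eval_eq_smeval,
    ascPochhammer_eval_eq_prod_range, nsmul_eq_mul] at h
  exact ⟨_, h.symm⟩

theorem Int.dvd_prod_range_add_mul_of_isCoprime {n b : ℤ} {m : ℕ} (a : ℤ) (hb : IsCoprime n b)
    (hn : n ∣ m !) : n ∣ ∏ j ∈ Finset.range m, (a + j * b) := by
  obtain ⟨u, v, huv⟩ := hb
  have hvb : v * b ≡ 1 [ZMOD n] := Int.modEq_iff_dvd.mpr ⟨u, by linarith⟩
  have hprod : v ^ m * ∏ j ∈ Finset.range m, (a + j * b) ≡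
      ∏ j ∈ Finset.range m, (v * a + j) [ZMOD n] := by
    rw [pow_eq_prod_const, ← prod_mul_distrib]
    refine Int.ModEq.prod fun j _ => ?_
    calc v * (a + j * b) = v * a + j * (v * b) := by ring
      _ ≡ v * a + j * 1 [ZMOD n] := by gcongr
      _ = v * a + j := by ring
  have hvn : IsCoprime n (v ^ m) := IsCoprime.pow_right ⟨u, b, by linarith⟩
  refine hvn.dvd_of_dvd_mul_left ((Int.ModEq.dvd_iff hprod).mpr ?_)
  exact hn.trans (Int.factorial_dvd_prod_range_add m (v * a))

theorem Nat.Prime.le_sub_one_of_pow_dvd_factorial {p k m : ℕ} (hp : p.Prime) (h : p ^ k ∣ m !) :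
    k ≤ m - 1 := by
  have : Fact p.Prime := ⟨hp⟩
  rcases eq_or_ne m 0 with rfl | hm
  · simpa [hp.ne_one] using h
  have hk : k ≤ padicValNat p m ! := (padicValNat_dvd_iff_le (factorial_ne_zero m)).mp h
  have := padicValNat_factorial_lt_of_ne_zero p hm
  omega

theorem stmt_7_general (m : ℕ) (a b : ℤ) :
    ((Nat.factorial m : ℕ) : ℤ) ∣ b ^ (m - 1) * ∏ j ∈ Finset.range m, (a + (j : ℤ) * b) := by
  rw [← Int.natAbs_dvd_natAbs, Int.natAbs_natCast, Nat.dvd_iff_prime_pow_dvd_dvd]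
  intro p k hp hpk
  rw [← Int.natCast_dvd, Nat.cast_pow]
  by_cases hpb : (p : ℤ) ∣ b
  · have hk := hp.le_sub_one_of_pow_dvd_factorial hpk
    exact ((pow_dvd_pow _ hk).trans (pow_dvd_pow_of_dvd hpb _)).mul_right _
  · have hcop : IsCoprime ((p : ℤ) ^ k) b :=
      ((Nat.prime_iff_prime_int.mp hp).coprime_iff_not_dvd.mpr hpb).pow_left
    exact (Int.dvd_prod_range_add_mul_of_isCoprime a hcop (by exact_mod_cast hpk)).mul_left _

theorem stmt_7 (m : ℕ) (hm : 1 ≤ m) (a b : ℤ) :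
    ((Nat.factorial m : ℕ) : ℤ) ∣ b ^ (m - 1) * ∏ j ∈ Finset.range m, (a + (j : ℤ) * b) :=
  stmt_7_general m a b
end

section
/- Let p be a prime and f ∈ ℤ[x] a primitive polynomial of degree n. If p > 1/2 + √n and p divides gcd{f(a) : a ∈ ℤ}, then the p-adic valuation of gcd{f(a) : a ∈ ℤ} is at most |f| − 1, where |f| is the number of nonzero coefficients of f. -/
/-!
Let `t = |f|` and suppose `p ^ t` divides every value of `f = ∑ cᵢ xⁱ`; the bound on `p` gives
`deg f ≤ p (p - 1)`. Averaging `f(ωᵃ v)` against powers of a Teichmüller root of unity `ω` of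
order `p - 1` modulo `p ^ t` isolates the exponents in one residue class `K` modulo `p - 1`,
and all values of that part are still divisible by `p ^ t`. Evaluating it at `(1 + p) ^ b` and
taking the binomial combinations of `((1 + p) ^ i - 1) ^ j` shows that the moments
`∑_{i ∈ K} cᵢ mᵢ ^ j`, with `mᵢ = ((1 + p) ^ i - 1) / p ≡ i (mod p)`, are divisible by
`p ^ (t - j)`. The constant term is `f(0)`, and the nonzero exponents in `K` are pairwise
incongruent modulo `p`, so a Vandermonde-type elimination gives `p ∣ cᵢ` for every `i`,
contradicting primitivity.
-/

open Finset Polynomial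

section RootOfUnityFilter

variable {R : Type*} [CommRing R] {q ω : R} {n : ℕ}

theorem dvd_geom_sum_pow_sub_ite (hω : q ∣ ω ^ n - 1)
    (hω' : ∀ d, ¬ n ∣ d → IsCoprime q (ω ^ d - 1)) (d : ℕ) :
    q ∣ ∑ a ∈ range n, (ω ^ d) ^ a - if n ∣ d then (n : R) else 0 := by
  split_ifs with hd
  · obtain ⟨e, rfl⟩ := hd
    have hsum : ∑ a ∈ range n, (ω ^ (n * e)) ^ a - n
        = ∑ a ∈ range n, ((ω ^ (n * e)) ^ a - 1) := by
      simp [sum_sub_distrib]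
    rw [hsum]
    exact dvd_sum fun a _ => hω.trans <|
      (pow_one_sub_dvd_pow_mul_sub_one ω n e).trans (sub_one_dvd_pow_sub_one _ a)
  · rw [sub_zero]
    refine (hω' d hd).dvd_of_dvd_mul_right ?_
    rw [geom_sum_mul, ← pow_mul, mul_comm]
    exact hω.trans (pow_one_sub_dvd_pow_mul_sub_one ω n d)

theorem dvd_sum_filter_dvd_add (hω : q ∣ ω ^ n - 1)
    (hω' : ∀ d, ¬ n ∣ d → IsCoprime q (ω ^ d - 1)) (hn : IsCoprime q n)
    {S : Finset ℕ} {c : ℕ → R} (h : ∀ v, q ∣ ∑ i ∈ S, c i * v ^ i) (k : ℕ) (v : R) :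
    q ∣ ∑ i ∈ S with n ∣ k + i, c i * v ^ i := by
  have hfourier : ∑ a ∈ range n, (ω ^ k) ^ a * ∑ i ∈ S, c i * (ω ^ a * v) ^ i
      = ∑ i ∈ S, c i * v ^ i * ∑ a ∈ range n, (ω ^ (k + i)) ^ a := by
    simp only [mul_sum]
    rw [sum_comm]
    refine sum_congr rfl fun i _ => sum_congr rfl fun a _ => ?_
    ring
  have hfilter : n * ∑ i ∈ S with n ∣ k + i, c i * v ^ i
      = ∑ i ∈ S, c i * v ^ i * ∑ a ∈ range n, (ω ^ (k + i)) ^ a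
        - ∑ i ∈ S, c i * v ^ i *
          (∑ a ∈ range n, (ω ^ (k + i)) ^ a - if n ∣ k + i then (n : R) else 0) := by
    rw [← sum_sub_distrib, sum_filter, mul_sum]
    exact sum_congr rfl fun i _ => by split_ifs <;> ring
  refine hn.dvd_of_dvd_mul_left ?_
  rw [hfilter, ← hfourier]
  exact dvd_sub (dvd_sum fun a _ => dvd_mul_of_dvd_right (h _) _)
    (dvd_sum fun i _ => dvd_mul_of_dvd_right (dvd_geom_sum_pow_sub_ite hω hω' _) _)

end RootOfUnityFilter

theorem Int.exists_primitive_root_of_unity_mod_prime_pow (p : ℕ) [hp : Fact p.Prime] (t : ℕ) :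
    ∃ ω : ℤ, (p : ℤ) ^ t ∣ ω ^ (p - 1) - 1 ∧
      ∀ d, ¬ (p - 1) ∣ d → IsCoprime ((p : ℤ) ^ t) (ω ^ d - 1) := by
  obtain ⟨ζ, hζ⟩ := IsCyclic.exists_ofOrder_eq_natCard (α := (ZMod p)ˣ)
  rw [Nat.card_eq_fintype_card, ZMod.card_units] at hζ
  obtain ⟨g, hg⟩ := ZMod.intCast_surjective (ζ : ZMod p)
  -- `g ^ p ^ t` is the Teichmüller lift of `ζ` modulo `p ^ t`.
  refine ⟨g ^ p ^ t, ?_, fun d hd => ?_⟩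
  · have hfermat : ((p : ℕ) : ℤ) ∣ g ^ (p - 1) - 1 := by
      rw [← ZMod.intCast_zmod_eq_zero_iff_dvd]
      push_cast
      rw [hg, ← Units.val_pow_eq_pow_val, ← hζ, pow_orderOf_eq_one, Units.val_one, sub_self]
    have := dvd_sub_pow_of_dvd_sub hfermat t
    rw [one_pow, ← pow_mul, mul_comm, pow_mul] at this
    exact (pow_dvd_pow _ t.le_succ).trans this
  · refine IsCoprime.pow_left ((Nat.prime_iff_prime_int.mp hp.out).coprime_iff_not_dvd.mpr ?_)
    rw [← ZMod.intCast_zmod_eq_zero_iff_dvd]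
    push_cast
    rw [hg, ZMod.pow_card_pow, sub_eq_zero, ← Units.val_pow_eq_pow_val, Units.val_eq_one,
      ← orderOf_dvd_iff_pow_eq_one, hζ]
    exact hd

theorem pow_sub_dvd_sum_mul_geom_sum_pow {R : Type*} [CommRing R] [IsDomain R] {q : R}
    (hq : q ≠ 0) {t : ℕ} {K : Finset ℕ} {c : ℕ → R} (h : ∀ v, q ^ t ∣ ∑ i ∈ K, c i * v ^ i)
    {j : ℕ} (hj : j ≤ t) : q ^ (t - j) ∣ ∑ i ∈ K, c i * (∑ l ∈ range i, (1 + q) ^ l) ^ j := by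
  have hbinom : q ^ j * ∑ i ∈ K, c i * (∑ l ∈ range i, (1 + q) ^ l) ^ j
      = ∑ b ∈ range (j + 1), (-1) ^ (b + j) * j.choose b * ∑ i ∈ K, c i * ((1 + q) ^ b) ^ i := by
    have hgeom : ∀ i, q * ∑ l ∈ range i, (1 + q) ^ l = (1 + q) ^ i - 1 := fun i => by
      rw [mul_comm, ← geom_sum_mul, add_sub_cancel_left]
    simp only [mul_sum, ← mul_pow, mul_left_comm (q ^ j), hgeom, sub_pow, one_pow]
    rw [sum_comm]
    refine sum_congr rfl fun i _ => sum_congr rfl fun b _ => by ring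
  rw [← mul_dvd_mul_iff_left (pow_ne_zero j hq), ← pow_add, Nat.add_sub_cancel' hj, hbinom]
  exact dvd_sum fun b _ => dvd_mul_of_dvd_right (h _) _

theorem Prime.forall_dvd_of_pow_dvd_moments {R ι : Type*} [CommRing R] [DecidableEq ι] {p : R}
    (hp : Prime p) {m : ι → R} (S : Finset ι)
    (hm : (S : Set ι).Pairwise fun i j => ¬ p ∣ m i - m j) (c : ι → R)
    (hsum : ∀ j < #S, p ^ (#S - j) ∣ ∑ i ∈ S, c i * m i ^ j) : ∀ i ∈ S, p ∣ c i := by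
  induction S using Finset.induction_on generalizing c with
  | empty => simp
  | insert a S ha ih =>
    rw [coe_insert, Set.pairwise_insert] at hm
    rw [card_insert_of_notMem ha] at hsum
    -- Multiplying by `m i - m a` kills the `a`-th coefficient and shifts the moments by one.
    have hS : ∀ i ∈ S, p ∣ c i * (m i - m a) := by
      refine ih hm.1 _ fun j hj => ?_
      have hshift : ∑ i ∈ S, c i * (m i - m a) * m i ^ j
          = ∑ i ∈ insert a S, c i * m i ^ (j + 1) - m a * ∑ i ∈ insert a S, c i * m i ^ j := by
        rw [← sum_insert_zero (s := S) (f := fun i => c i * (m i - m a) * m i ^ j) (by ring),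
          mul_sum, ← sum_sub_distrib]
        exact sum_congr rfl fun i _ => by ring
      rw [hshift]
      exact dvd_sub (by simpa using hsum (j + 1) (by omega))
        (dvd_mul_of_dvd_right ((pow_dvd_pow p (by omega)).trans (hsum j (by omega))) _)
    have hS' : ∀ i ∈ S, p ∣ c i := fun i hi =>
      ((hp.dvd_or_dvd (hS i hi)).resolve_right ((hm.2 i hi (by rintro rfl; exact ha hi)).2))
    have h0 : p ∣ ∑ i ∈ insert a S, c i := by
      simpa using (dvd_pow_self p (by omega)).trans (hsum 0 (by omega))
    rw [sum_insert ha] at h0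
    intro i hi
    rcases mem_insert.mp hi with rfl | hi
    · exact (dvd_add_left (dvd_sum hS')).mp h0
    · exact hS' i hi

theorem ZMod.intCast_geom_sum_one_add_self (p i : ℕ) :
    ((∑ l ∈ range i, (1 + (p : ℤ)) ^ l : ℤ) : ZMod p) = i := by
  push_cast
  simp

theorem Nat.Prime.eq_of_modEq_of_modEq_sub_one {p i j : ℕ} (hp : p.Prime)
    (hi : i ∈ Icc 1 (p * (p - 1))) (hj : j ∈ Icc 1 (p * (p - 1)))
    (h : i ≡ j [MOD p]) (h' : i ≡ j [MOD p - 1]) : i = j := by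
  have hcop : p.Coprime (p - 1) :=
    (Nat.coprime_self_sub_right hp.one_le).mpr (Nat.coprime_one_right p)
  refine ((Nat.modEq_and_modEq_iff_modEq_mul hcop).mp ⟨h, h'⟩).eq_of_abs_lt ?_
  rw [mem_Icc] at hi hj
  exact abs_sub_lt_iff.mpr ⟨by omega, by omega⟩

theorem Nat.Prime.dvd_coeff_of_forall_pow_dvd_sum_of_subset_Icc {p : ℕ} (hp : p.Prime)
    {S : Finset ℕ} (hS : S ⊆ Icc 1 (p * (p - 1))) {c : ℕ → ℤ} {t : ℕ} (ht : #S ≤ t)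
    (h : ∀ v : ℤ, (p : ℤ) ^ t ∣ ∑ i ∈ S, c i * v ^ i) : ∀ i ∈ S, (p : ℤ) ∣ c i := by
  have := Fact.mk hp
  have hp2 := hp.two_le
  intro i₀ hi₀
  obtain ⟨ω, hω, hω'⟩ := Int.exists_primitive_root_of_unity_mod_prime_pow p t
  have hp1 : IsCoprime ((p : ℤ) ^ t) ((p - 1 : ℕ) : ℤ) := by
    refine IsCoprime.pow_left ((Nat.prime_iff_prime_int.mp hp).coprime_iff_not_dvd.mpr ?_)
    exact Int.natCast_dvd_natCast.not.mpr (Nat.not_dvd_of_pos_of_lt (by omega) (by omega))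
  -- `K` is the residue class of `i₀` modulo `p - 1`; by CRT, `i ↦ i mod p` is injective on it.
  set K := S.filter fun i => (p - 1) ∣ ((p - 1) * i₀ - i₀) + i
  have hi₀K : i₀ ∈ K := mem_filter.mpr ⟨hi₀, by
    rw [Nat.sub_add_cancel (Nat.le_mul_of_pos_left i₀ (by omega))]
    exact dvd_mul_right _ _⟩
  have hclass : ∀ i ∈ K, ∀ j ∈ K, i ≡ j [MOD p - 1] := fun i hi j hj =>
    Nat.ModEq.add_left_cancel' _ <| (Nat.modEq_zero_iff_dvd.mpr (mem_filter.mp hi).2).trans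
      (Nat.modEq_zero_iff_dvd.mpr (mem_filter.mp hj).2).symm
  set m : ℕ → ℤ := fun i => ∑ l ∈ range i, (1 + (p : ℤ)) ^ l
  have hdist : (K : Set ℕ).Pairwise fun i j => ¬ (p : ℤ) ∣ m i - m j := by
    intro i hi j hj hij hdvd
    rw [← ZMod.intCast_eq_intCast_iff_dvd_sub, ZMod.intCast_geom_sum_one_add_self,
      ZMod.intCast_geom_sum_one_add_self, ZMod.natCast_eq_natCast_iff] at hdvd
    exact hij (hp.eq_of_modEq_of_modEq_sub_one (hS (filter_subset _ _ hj))
      (hS (filter_subset _ _ hi)) hdvd (hclass j hj i hi)).symm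
  have hKt : #K ≤ t := (card_le_card (filter_subset _ _)).trans ht
  refine (Nat.prime_iff_prime_int.mp hp).forall_dvd_of_pow_dvd_moments K hdist c
    (fun j hj => ?_) i₀ hi₀K
  exact (pow_dvd_pow _ (by omega)).trans <|
    pow_sub_dvd_sum_mul_geom_sum_pow (by exact_mod_cast hp.ne_zero)
      (dvd_sum_filter_dvd_add hω hω' hp1 h _) (by omega)

theorem Polynomial.IsPrimitive.not_forall_pow_card_support_dvd_eval {p : ℕ} (hp : p.Prime)
    {f : Polynomial ℤ} (hf : f.IsPrimitive) (hdeg : f.natDegree ≤ p * (p - 1)) :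
    ¬ ∀ a : ℤ, (p : ℤ) ^ #f.support ∣ f.eval a := by
  intro h
  have ht : 1 ≤ #f.support := card_pos.mpr (support_nonempty.mpr hf.ne_zero)
  have hc0 : (p : ℤ) ^ #f.support ∣ f.coeff 0 := coeff_zero_eq_eval_zero f ▸ h 0
  have heval : ∀ v, f.eval v = f.coeff 0 + ∑ i ∈ f.support.erase 0, f.coeff i * v ^ i := by
    intro v
    rw [eval_eq_sum, sum_def]
    by_cases h0 : 0 ∈ f.support
    · rw [← add_sum_erase _ _ h0, pow_zero, mul_one]
    · rw [erase_eq_of_notMem h0, notMem_support_iff.mp h0, zero_add]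
  have hpos : ∀ i ∈ f.support.erase 0, (p : ℤ) ∣ f.coeff i := by
    refine hp.dvd_coeff_of_forall_pow_dvd_sum_of_subset_Icc (fun i hi => ?_) (card_erase_le)
      fun v => (dvd_add_right hc0).mp (heval v ▸ h v)
    obtain ⟨hi0, hi⟩ := mem_erase.mp hi
    exact mem_Icc.mpr ⟨Nat.one_le_iff_ne_zero.mpr hi0, (le_natDegree_of_mem_supp i hi).trans hdeg⟩
  have hC : C (p : ℤ) ∣ f := by
    refine (C_dvd_iff_dvd_coeff _ _).mpr fun i => ?_
    by_cases hi0 : i = 0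
    · exact hi0 ▸ (dvd_pow_self _ (by omega)).trans hc0
    by_cases hi : i ∈ f.support
    · exact hpos i (mem_erase.mpr ⟨hi0, hi⟩)
    · rw [notMem_support_iff.mp hi]
      exact dvd_zero _
  exact (Nat.prime_iff_prime_int.mp hp).not_isUnit (hf _ hC)

theorem Nat.le_mul_sub_one_of_half_add_sqrt_lt {n p : ℕ} (h : (1 : ℝ) / 2 + √n < p) :
    n ≤ p * (p - 1) := by
  have hp : 1 ≤ p := by exact_mod_cast (show (0 : ℝ) < p by linarith [Real.sqrt_nonneg n])
  have hsq : (n : ℝ) < (p - 1 / 2) ^ 2 :=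
    (Real.sqrt_lt' (by linarith [Real.sqrt_nonneg n])).mp (by linarith)
  have hlt : (n : ℝ) < (p * (p - 1) + 1 : ℕ) := by
    push_cast [Nat.cast_sub hp]
    nlinarith
  exact Nat.lt_succ_iff.mp (by exact_mod_cast hlt)

theorem stmt_8_general (p : ℕ) (hp : p.Prime) (f : Polynomial ℤ) (n : ℕ)
    (hdeg : f.natDegree = n) (hprim : f.IsPrimitive)
    (hbig : (1 : ℝ) / 2 + Real.sqrt n < p) :
    ∀ e : ℕ, (∀ a : ℤ, (p : ℤ) ^ e ∣ f.eval a) → e ≤ f.support.card - 1 := by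
  intro e he
  by_contra! hlt
  refine hprim.not_forall_pow_card_support_dvd_eval hp
    (hdeg ▸ Nat.le_mul_sub_one_of_half_add_sqrt_lt hbig) fun a => ?_
  exact (pow_dvd_pow _ (by omega)).trans (he a)

theorem stmt_8 (p : ℕ) (hp : p.Prime) (f : Polynomial ℤ) (n : ℕ)
    (hdeg : f.natDegree = n) (hprim : f.IsPrimitive)
    (hbig : (1 : ℝ) / 2 + Real.sqrt n < p)
    (hdvd : ∀ a : ℤ, (p : ℤ) ∣ f.eval a) :
    ∀ e : ℕ, (∀ a : ℤ, (p : ℤ) ^ e ∣ f.eval a) → e ≤ f.support.card - 1 :=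
  stmt_8_general p hp f n hdeg hprim hbig
end

section
/- Let f ∈ ℤ[x] and write f in the falling-factorial basis: f(x) = Σ_{i=0}^{k} bᵢ · x(x−1)⋯(x−i+1). Then gcd{f(a) : a ∈ ℤ} = gcd(b₀·0!, b₁·1!, ..., b_k·k!). -/
/-!
Writing `f = ∑ bᵢ (x)ᵢ`, each value `(a)ᵢ = i! * (a choose i)` is a multiple of `i!`, so every
value of `f` lies in the ideal generated by the `bᵢ i!`. Conversely `(n)ᵢ` vanishes for `i > n`
and `(n)ₙ = n!`, so `f(n) = bₙ n! + ∑_{i<n} bᵢ (n)ᵢ`, and `(n)ᵢ = i! * (n choose i)` makes the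
system triangular: by strong induction on `n`, each `bₙ n!` lies in the ideal of values of `f`.
-/

open Polynomial Finset

open scoped Nat

lemma factorial_dvd_descPochhammer_eval (i : ℕ) (a : ℤ) :
    (i ! : ℤ) ∣ (descPochhammer ℤ i).eval a := by
  rw [eval_eq_smeval, Ring.descPochhammer_eq_factorial_smul_choose, nsmul_eq_mul]
  exact dvd_mul_right _ _

section CommRing

variable {R : Type*} [CommRing R]

lemma sum_range_mul_descFactorial_of_le (b : ℕ → R) {n k : ℕ} (hnk : n ≤ k) :
    ∑ i ∈ range (k + 1), b i * (n.descFactorial i : R) =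
      ∑ i ∈ range n, b i * (n.descFactorial i : R) + b n * (n ! : R) := by
  rw [← Nat.descFactorial_self, ← sum_range_succ]
  refine (sum_subset (range_subset_range.mpr (by omega)) fun i _ hi => ?_).symm
  rw [Nat.descFactorial_eq_zero_iff_lt.mpr (by simpa using hi), Nat.cast_zero, mul_zero]

lemma mul_factorial_mem_of_forall_sum_mul_descFactorial_mem (b : ℕ → R) (k : ℕ) (I : Ideal R)
    (hI : ∀ n ≤ k, ∑ i ∈ range (k + 1), b i * (n.descFactorial i : R) ∈ I) :
    ∀ n ≤ k, b n * (n ! : R) ∈ I := by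
  intro n
  induction n using Nat.strong_induction_on with
  | _ n ih =>
    intro hnk
    have hsum := hI n hnk
    rw [sum_range_mul_descFactorial_of_le b hnk] at hsum
    refine (I.add_mem_iff_right (sum_mem fun i hi => ?_)).mp hsum
    have hin : i < n := mem_range.mp hi
    rw [Nat.descFactorial_eq_factorial_mul_choose, Nat.cast_mul, ← mul_assoc]
    exact I.mul_mem_right _ (ih i hin (hin.le.trans hnk))

end CommRing

theorem stmt_9 (k : ℕ) (b : ℕ → ℤ) (f : Polynomial ℤ)
    (hf : f = ∑ i ∈ Finset.range (k + 1),
      Polynomial.C (b i) * ∏ j ∈ Finset.range i, (Polynomial.X - Polynomial.C (j : ℤ))) :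
    Ideal.span (Set.range fun a : ℤ => f.eval a) =
      Ideal.span ((fun i : ℕ => b i * ((Nat.factorial i : ℕ) : ℤ)) '' Set.Iic k) := by
  have heval : ∀ a : ℤ, f.eval a = ∑ i ∈ range (k + 1), b i * (descPochhammer ℤ i).eval a := by
    simp [hf, eval_finsetSum, eval_prod, descPochhammer_eval_eq_prod_range]
  refine le_antisymm (Ideal.span_le.mpr ?_) (Ideal.span_le.mpr ?_)
  · rintro _ ⟨a, rfl⟩
    change f.eval a ∈ _
    rw [heval a]
    refine sum_mem fun i hi => ?_
    obtain ⟨c, hc⟩ := factorial_dvd_descPochhammer_eval i a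
    rw [hc, ← mul_assoc]
    have hik : i ∈ Set.Iic k := Set.mem_Iic.mpr (mem_range_succ_iff.mp hi)
    exact Ideal.mul_mem_right _ _ (Ideal.subset_span ⟨i, hik, rfl⟩)
  · rintro _ ⟨n, hn, rfl⟩
    refine mul_factorial_mem_of_forall_sum_mul_descFactorial_mem b k _ (fun m _ => ?_) n hn
    simpa only [SetLike.mem_coe, heval, descPochhammer_eval_eq_descFactorial] using
      Ideal.subset_span (Set.mem_range_self (f := fun a : ℤ => f.eval a) m)
end

section
/- Let f ∈ ℤ[x] be a primitive polynomial. Then f is irreducible in the ring Int(ℤ) = {g ∈ ℚ[x] : g(ℤ) ⊆ ℤ} if and only if f is irreducible in ℤ[x] and gcd{f(a) : a ∈ ℤ} = 1. -/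
/-!
An element of Int(ℤ) that is a unit of ℚ[x] is an integer constant, and evaluation at 0 is a
ring map Int(ℤ) → ℤ; hence the units of Int(ℤ) are ±1, and ℤ[x] → Int(ℤ) reflects units and
associates. If a non-unit d divides every value of f, then f = d · (f / d) is a nontrivial
factorization in Int(ℤ) unless f is associated to d, which primitivity rules out. Conversely, by
Gauss's lemma a factorization of f in Int(ℤ) has a factor that is constant, hence an integer that
divides every value f(a), hence ±1.
-/

noncomputable def IntZ : Subring (Polynomial ℚ) where
  carrier := {f : Polynomial ℚ | ∀ a : ℤ, ∃ z : ℤ, f.eval (a : ℚ) = (z : ℚ)}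
  zero_mem' := fun a => ⟨0, by simp⟩
  one_mem' := fun a => ⟨1, by simp⟩
  add_mem' := by
    rintro f g hf hg a
    obtain ⟨z, hz⟩ := hf a
    obtain ⟨w, hw⟩ := hg a
    exact ⟨z + w, by simp [hz, hw]⟩
  mul_mem' := by
    rintro f g hf hg a
    obtain ⟨z, hz⟩ := hf a
    obtain ⟨w, hw⟩ := hg a
    exact ⟨z * w, by simp [hz, hw]⟩
  neg_mem' := by
    rintro f hf a
    obtain ⟨z, hz⟩ := hf a
    exact ⟨-z, by simp [hz]⟩

open Polynomial

theorem Ideal.span_range_eq_top_iff_forall_dvd {R ι : Type*} [CommRing R]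
    [IsPrincipalIdealRing R] (v : ι → R) :
    Ideal.span (Set.range v) = ⊤ ↔ ∀ d : R, (∀ i, d ∣ v i) → IsUnit d := by
  constructor
  · intro htop d hd
    rw [← Ideal.span_singleton_eq_top, eq_top_iff, ← htop, Ideal.span_le]
    rintro _ ⟨i, rfl⟩
    exact Ideal.mem_span_singleton.mpr (hd i)
  · intro h
    obtain ⟨d, hd⟩ := (IsPrincipalIdealRing.principal (Ideal.span (Set.range v))).principal
    rw [hd, Ideal.span_singleton_eq_top]
    refine h d fun i => Ideal.mem_span_singleton.mp ?_
    rw [← Ideal.submodule_span_eq, ← hd]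
    exact Ideal.subset_span ⟨i, rfl⟩

namespace IntZ

noncomputable def ofIntPoly : ℤ[X] →+* IntZ :=
  (mapRingHom (Int.castRingHom ℚ)).codRestrict IntZ
    fun g a => ⟨g.eval a, by simp [eval_intCast_map]⟩

@[simp]
theorem coe_ofIntPoly (g : ℤ[X]) : (ofIntPoly g : ℚ[X]) = g.map (Int.castRingHom ℚ) := rfl

theorem ofIntPoly_injective : Function.Injective ofIntPoly := fun _ _ h =>
  map_injective _ Int.cast_injective (congrArg Subtype.val h)

theorem exists_intCast_eq_eval (g : IntZ) (a : ℤ) :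
    ∃ z : ℤ, (z : ℚ) = (g : ℚ[X]).eval (a : ℚ) :=
  (g.2 a).imp fun _ h => h.symm

noncomputable def evalAt (a : ℤ) : IntZ →+* ℤ where
  toFun g := (exists_intCast_eq_eval g a).choose
  map_one' := Int.cast_injective (α := ℚ) <| by
    rw [(exists_intCast_eq_eval 1 a).choose_spec]; simp
  map_mul' g h := Int.cast_injective (α := ℚ) <| by
    rw [(exists_intCast_eq_eval (g * h) a).choose_spec, Int.cast_mul,
      (exists_intCast_eq_eval g a).choose_spec, (exists_intCast_eq_eval h a).choose_spec]
    simp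
  map_zero' := Int.cast_injective (α := ℚ) <| by
    rw [(exists_intCast_eq_eval 0 a).choose_spec]; simp
  map_add' g h := Int.cast_injective (α := ℚ) <| by
    rw [(exists_intCast_eq_eval (g + h) a).choose_spec, Int.cast_add,
      (exists_intCast_eq_eval g a).choose_spec, (exists_intCast_eq_eval h a).choose_spec]
    simp

@[simp]
theorem intCast_evalAt (a : ℤ) (g : IntZ) : (evalAt a g : ℚ) = (g : ℚ[X]).eval (a : ℚ) :=
  (exists_intCast_eq_eval g a).choose_spec

@[simp]
theorem evalAt_ofIntPoly (a : ℤ) (g : ℤ[X]) : evalAt a (ofIntPoly g) = g.eval a :=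
  Int.cast_injective (α := ℚ) (by simp [eval_intCast_map])

theorem exists_eq_intCast_of_isUnit_coe {g : IntZ} (hg : IsUnit (g : ℚ[X])) :
    ∃ z : ℤ, g = z := by
  obtain ⟨c, -, hc⟩ := Polynomial.isUnit_iff.mp hg
  refine ⟨evalAt 0 g, Subtype.ext ?_⟩
  rw [SubringClass.coe_intCast, ← C_eq_intCast, intCast_evalAt, ← hc]
  simp

theorem isUnit_iff {u : IntZ} : IsUnit u ↔ u = 1 ∨ u = -1 := by
  refine ⟨fun hu => ?_, ?_⟩
  · obtain ⟨z, rfl⟩ := exists_eq_intCast_of_isUnit_coe (hu.map IntZ.subtype)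
    have hz : IsUnit z := by simpa using hu.map (evalAt 0)
    rcases Int.isUnit_iff.mp hz with rfl | rfl <;> simp
  · rintro (rfl | rfl)
    exacts [isUnit_one, isUnit_one.neg]

instance : IsLocalHom ofIntPoly where
  map_nonunit g hg := by
    rcases isUnit_iff.mp hg with h | h
    · rw [ofIntPoly_injective (h.trans (map_one _).symm)]; exact isUnit_one
    · rw [ofIntPoly_injective (h.trans (by rw [map_neg, map_one]))]; exact isUnit_one.neg

theorem associated_ofIntPoly_iff {g h : ℤ[X]} :
    Associated (ofIntPoly g) (ofIntPoly h) ↔ Associated g h := by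
  refine ⟨fun ⟨u, hu⟩ => ?_, Associated.map ofIntPoly⟩
  rcases isUnit_iff.mp u.isUnit with hu1 | hu1
  · rw [hu1, mul_one] at hu
    exact .of_eq (ofIntPoly_injective hu)
  · rw [hu1, mul_neg_one, ← map_neg] at hu
    rw [← ofIntPoly_injective hu]
    exact (Associated.refl g).neg_right

theorem intCast_dvd_ofIntPoly {d : ℤ} {f : ℤ[X]} (hd : ∀ a : ℤ, d ∣ f.eval a) :
    (d : IntZ) ∣ ofIntPoly f := by
  rcases eq_or_ne d 0 with rfl | hd0
  · simp [zero_of_eval_zero f fun a => zero_dvd_iff.mp (hd a)]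
  have hdQ : (d : ℚ) ≠ 0 := Int.cast_ne_zero.mpr hd0
  refine ⟨⟨C (d : ℚ)⁻¹ * f.map (Int.castRingHom ℚ), fun a => ?_⟩, Subtype.ext ?_⟩
  · obtain ⟨k, hk⟩ := hd a
    refine ⟨k, ?_⟩
    rw [eval_mul, eval_C, eval_intCast_map, eq_intCast, Int.cast_id, hk, Int.cast_mul,
      inv_mul_cancel_left₀ hdQ]
  · rw [coe_ofIntPoly, Subring.coe_mul, SubringClass.coe_intCast, ← C_eq_intCast, ← mul_assoc,
      ← C_mul, mul_inv_cancel₀ hdQ, C_1, one_mul]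

theorem isUnit_of_dvd_of_isUnit_coe {f : ℤ[X]}
    (hf : ∀ d : ℤ, (∀ a : ℤ, d ∣ f.eval a) → IsUnit d) {G : IntZ} (hG : G ∣ ofIntPoly f)
    (hGu : IsUnit (G : ℚ[X])) : IsUnit G := by
  obtain ⟨z, rfl⟩ := exists_eq_intCast_of_isUnit_coe hGu
  refine (hf z fun a => ?_).map (Int.castRingHom IntZ)
  simpa using map_dvd (evalAt a) hG

end IntZ

theorem stmt_11 (f : Polynomial ℤ) (hprim : f.IsPrimitive)
    (F : IntZ) (hF : (F : Polynomial ℚ) = f.map (Int.castRingHom ℚ)) :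
    Irreducible F ↔
      Irreducible f ∧ Ideal.span (Set.range fun a : ℤ => f.eval a) = ⊤ := by
  obtain rfl : F = IntZ.ofIntPoly f := Subtype.ext hF
  rw [Ideal.span_range_eq_top_iff_forall_dvd]
  constructor
  · intro hF
    refine ⟨hF.of_map, fun d hd => ?_⟩
    rcases hF.dvd_iff.mp (IntZ.intCast_dvd_ofIntPoly hd) with hu | hassoc
    · simpa using hu.map (IntZ.evalAt 0)
    · rw [← map_intCast IntZ.ofIntPoly, IntZ.associated_ofIntPoly_iff, ← C_eq_intCast]
        at hassoc
      exact hprim d hassoc.symm.dvd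
  · rintro ⟨hf, hvals⟩
    have hfQ := (IsPrimitive.Int.irreducible_iff_irreducible_map_cast hprim).mp hf
    refine ⟨fun hu => hf.not_isUnit (isUnit_of_map_unit _ _ hu), fun G H hGH => ?_⟩
    have hGHQ : f.map (Int.castRingHom ℚ) = G * H := congrArg Subtype.val hGH
    rcases hfQ.isUnit_or_isUnit hGHQ with hG | hH
    · exact Or.inl (IntZ.isUnit_of_dvd_of_isUnit_coe hvals (Dvd.intro _ hGH.symm) hG)
    · exact Or.inr (IntZ.isUnit_of_dvd_of_isUnit_coe hvals (Dvd.intro_left _ hGH.symm) hH)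
end

section
/- For any prime p and any f ∈ ℤ[x], the p-adic valuation of gcd{f(a) : a ∈ ℤ} equals the minimum over a ∈ {0, 1, ..., p^N − 1} of ord_p(f(a)), for N sufficiently large; in particular, for f of degree k and p > k, p divides gcd{f(a) : a ∈ ℤ} if and only if p divides f(0), f(1), ..., f(k). -/
/-!
Since `a ≡ b [ZMOD m]` implies `f(a) ≡ f(b) [ZMOD m]`, divisibility of all values of `f` by
`p ^ e` with `e ≤ N` can be tested on the residues `0, …, p ^ N - 1`. For `e > N` the tested
condition still makes `p ^ N` divide every value, which is impossible for `f ≠ 0` once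
`p ^ N > |f(a₀)|` at a point with `f(a₀) ≠ 0`. For the second part, the reduction of `f` modulo
`p` has degree `k < p` but the `k + 1` distinct roots `0, …, k` in `𝔽_p`, so it is zero.
-/

open Polynomial

theorem Polynomial.forall_dvd_eval_iff_forall_range {q : ℤ} {m : ℕ} (hm : m ≠ 0)
    (hqm : q ∣ m) (f : ℤ[X]) :
    (∀ a : ℤ, q ∣ f.eval a) ↔ ∀ r ∈ Finset.range m, q ∣ f.eval (r : ℤ) := by
  refine ⟨fun h r _ => h r, fun h a => ?_⟩
  have hr : ((a.natMod m : ℕ) : ℤ) = a % m := Int.toNat_of_nonneg (Int.emod_nonneg a (by omega))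
  have hq : q ∣ f.eval a - f.eval (a.natMod m : ℤ) :=
    (hqm.trans (by rw [hr]; exact Int.dvd_self_sub_emod)).trans (sub_dvd_eval_sub _ _ f)
  exact (dvd_sub_left (h _ (Finset.mem_range.mpr (Int.natMod_lt hm)))).mp hq

theorem Polynomial.exists_forall_pow_dvd_eval_imp_eq_zero {p : ℕ} (hp : 1 < p) (f : ℤ[X]) :
    ∃ N₀ : ℕ, ∀ N ≥ N₀, (∀ a : ℤ, (p : ℤ) ^ N ∣ f.eval a) → f = 0 := by
  by_cases hf : f = 0
  · exact ⟨0, fun _ _ _ => hf⟩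
  obtain ⟨a₀, ha₀⟩ : ∃ a, f.eval a ≠ 0 := by
    by_contra! h
    exact hf (zero_of_eval_zero f h)
  refine ⟨(f.eval a₀).natAbs, fun N hN h => absurd ?_ ha₀⟩
  refine Int.eq_zero_of_dvd_of_natAbs_lt_natAbs (h a₀) ?_
  calc (f.eval a₀).natAbs < p ^ (f.eval a₀).natAbs := Nat.lt_pow_self hp
    _ ≤ p ^ N := Nat.pow_le_pow_right (by omega) hN
    _ = ((p : ℤ) ^ N).natAbs := by simp [Int.natAbs_pow]

theorem Polynomial.map_zmod_eq_zero_of_dvd_eval_range {p : ℕ} [Fact p.Prime] (f : ℤ[X])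
    (hdeg : f.natDegree < p) (h : ∀ i ∈ Finset.range (f.natDegree + 1), (p : ℤ) ∣ f.eval (i : ℤ)) :
    f.map (Int.castRingHom (ZMod p)) = 0 := by
  refine eq_zero_of_natDegree_lt_card_of_eval_eq_zero _ (ι := Fin (f.natDegree + 1))
    (f := fun i => ((i : ℕ) : ZMod p)) ?_ (fun i => ?_) ?_
  · intro i j hij
    simpa [Fin.ext_iff, ZMod.natCast_eq_natCast_iff', Nat.mod_eq_of_lt (by omega : (i : ℕ) < p),
      Nat.mod_eq_of_lt (by omega : (j : ℕ) < p)] using hij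
  · simpa [← ZMod.intCast_zmod_eq_zero_iff_dvd] using h i (Finset.mem_range.mpr i.isLt)
  · simpa using natDegree_map_le.trans_lt (Nat.lt_succ_self _)

theorem stmt_18 (p : ℕ) (hp : p.Prime) (f : Polynomial ℤ) :
    (∃ N₀ : ℕ, ∀ N ≥ N₀, ∀ e : ℕ,
      ((∀ a : ℤ, (p : ℤ) ^ e ∣ f.eval a) ↔
        (∀ a ∈ Finset.range (p ^ N), (p : ℤ) ^ e ∣ f.eval (a : ℤ)))) ∧
    (f.natDegree < p →
      ((∀ a : ℤ, (p : ℤ) ∣ f.eval a) ↔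
        ∀ i ∈ Finset.range (f.natDegree + 1), (p : ℤ) ∣ f.eval (i : ℤ))) := by
  have : Fact p.Prime := ⟨hp⟩
  have hpN (N : ℕ) : p ^ N ≠ 0 := pow_ne_zero N hp.ne_zero
  refine ⟨?_, fun hdeg => ⟨fun h i _ => h i, fun h a => ?_⟩⟩
  · obtain ⟨N₀, hN₀⟩ := f.exists_forall_pow_dvd_eval_imp_eq_zero hp.one_lt
    refine ⟨N₀, fun N hN e => ?_⟩
    rcases le_or_gt e N with heN | hNe
    · exact f.forall_dvd_eval_iff_forall_range (hpN N) (by exact_mod_cast pow_dvd_pow p heN)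
    · refine ⟨fun h r _ => h r, fun h => ?_⟩
      have hf : f = 0 := hN₀ N hN <| (f.forall_dvd_eval_iff_forall_range (hpN N) (by simp)).mpr
        fun r hr => (pow_dvd_pow _ hNe.le).trans (h r hr)
      simp [hf]
  · have hmap := congr_arg (eval (a : ZMod p)) (f.map_zmod_eq_zero_of_dvd_eval_range hdeg h)
    exact (ZMod.intCast_zmod_eq_zero_iff_dvd _ _).mp (by simpa using hmap)
end
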